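/- Let H ⊆ ℝ be a bounded Lebesgue measurable set with λ(H) > 0. Then {x ∈ ℝ : for every ε > 0 there exists L ⊆ S(x, ε) such that H ∖ L is Lebesgue measurable, λ(H ∖ L) > 0, and Avg(H ∖ L) ≠ Avg(H)} = {x ∈ ℝ : for every δ > 0, λ(H ∩ S(x, δ)) > 0}. -/

import Mathlib

open MeasureTheory

/-- The mean `Avg` by Lebesgue measure. -/
noncomputable def avg (H : Set ℝ) : ℝ := (∫ x in H, x) / (volume H).toReal

/-!
Removing a set `L` changes `Avg H` exactly when `∫_{H \ L} (t - Avg H) ≠ 0`, i.e. when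
`∫_{H ∩ L} (t - Avg H) ≠ 0`, since `t - Avg H` has integral zero over `H`. If `H` is null near
`x`, every admissible `L ⊆ S(x, ε)` only changes `H` by a null set. Otherwise `H ∩ S(x, ε)` has
positive measure on one side of `Avg H`, and removing that part moves the mean.
-/

open Set

section SetIntegral

variable {X : Type*} [MeasurableSpace X] {μ : Measure X} {s : Set X}

theorem measure_pos_of_setIntegral_ne_zero {E : Type*} [NormedAddCommGroup E] [NormedSpace ℝ E]
    {f : X → E} (h : ∫ x in s, f x ∂μ ≠ 0) : 0 < μ s :=
  pos_iff_ne_zero.2 fun h0 => h (setIntegral_measure_zero f h0)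

variable {f : X → ℝ}

theorem setIntegral_pos_of_forall_pos (hs : MeasurableSet s) (hf : IntegrableOn f s μ)
    (hpos : ∀ x ∈ s, 0 < f x) (hμ : 0 < μ s) : 0 < ∫ x in s, f x ∂μ := by
  rw [setIntegral_pos_iff_support_of_nonneg_ae _ hf,
    inter_eq_right.2 fun x hx => Function.mem_support.2 (hpos x hx).ne']
  · exact hμ
  · filter_upwards [ae_restrict_mem hs] with x hx using (hpos x hx).le

theorem setIntegral_neg_of_forall_neg (hs : MeasurableSet s) (hf : IntegrableOn f s μ)
    (hneg : ∀ x ∈ s, f x < 0) (hμ : 0 < μ s) : ∫ x in s, f x ∂μ < 0 := by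
  simpa [integral_neg] using
    setIntegral_pos_of_forall_pos hs hf.neg (fun x hx => neg_pos.2 (hneg x hx)) hμ

end SetIntegral

variable {S : Set ℝ}

theorem Bornology.IsBounded.integrableOn_sub_const (hS : Bornology.IsBounded S) (c : ℝ) :
    IntegrableOn (fun t => t - c) S :=
  ((continuous_sub_right c).continuousOn.integrableOn_compact hS.isCompact_closure).mono_set
    subset_closure

theorem avg_eq_setAverage (S : Set ℝ) : avg S = ⨍ t in S, t := by
  rw [avg, setAverage_eq, smul_eq_mul, measureReal_def, div_eq_inv_mul]

theorem avg_congr_ae {T : Set ℝ} (h : S =ᵐ[volume] T) : avg S = avg T := by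
  rw [avg, avg, setIntegral_congr_set h, measure_congr h]

theorem setIntegral_sub_avg_eq_zero (hS : volume S ≠ ⊤) : ∫ t in S, (t - avg S) = 0 := by
  rw [avg_eq_setAverage]
  exact setAverage_sub_setAverage hS _

theorem avg_ne_of_setIntegral_sub_ne_zero {c : ℝ} (hS : volume S ≠ ⊤)
    (h : ∫ t in S, (t - c) ≠ 0) : avg S ≠ c := by
  rintro rfl
  exact h (setIntegral_sub_avg_eq_zero hS)

theorem exists_subset_setIntegral_sub_ne_zero (hb : Bornology.IsBounded S)
    (hS : MeasurableSet S) (hpos : 0 < volume S) (c : ℝ) :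
    ∃ A ⊆ S, MeasurableSet A ∧ ∫ t in A, (t - c) ≠ 0 := by
  have hsplit : volume S ≤ volume (S ∩ Iio c) + volume (S ∩ Ioi c) := calc
    volume S = volume (S ∩ (Iio c ∪ Ioi c)) := by
      rw [Iio_union_Ioi, ← sdiff_eq, measure_sdiff_null Real.volume_singleton]
    _ ≤ volume (S ∩ Iio c) + volume (S ∩ Ioi c) := by
      rw [inter_union_distrib_left]
      exact measure_union_le _ _
  rcases add_pos_iff.1 (hpos.trans_le hsplit) with hlt | hgt
  · have hA : MeasurableSet (S ∩ Iio c) := hS.inter measurableSet_Iio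
    refine ⟨S ∩ Iio c, inter_subset_left, hA, (setIntegral_neg_of_forall_neg hA ?_ ?_ hlt).ne⟩
    · exact (hb.subset inter_subset_left).integrableOn_sub_const c
    · exact fun t ht => sub_neg.2 ht.2
  · have hA : MeasurableSet (S ∩ Ioi c) := hS.inter measurableSet_Ioi
    refine ⟨S ∩ Ioi c, inter_subset_left, hA, (setIntegral_pos_of_forall_pos hA ?_ ?_ hgt).ne'⟩
    · exact (hb.subset inter_subset_left).integrableOn_sub_const c
    · exact fun t ht => sub_pos.2 ht.2

theorem accPoints_avg_eq_general (H : Set ℝ)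
    (hb : Bornology.IsBounded H) (hm : MeasurableSet H) :
    {x : ℝ | ∀ ε > 0, ∃ L : Set ℝ, L ⊆ Metric.ball x ε ∧
        MeasurableSet (H \ L) ∧ 0 < volume (H \ L) ∧ avg (H \ L) ≠ avg H} =
      {x : ℝ | ∀ δ > 0, 0 < volume (H ∩ Metric.ball x δ)} := by
  ext x
  refine ⟨fun h δ hδ => ?_, fun h ε hε => ?_⟩
  · obtain ⟨L, hL, -, -, hne⟩ := h δ hδ
    refine pos_iff_ne_zero.2 fun hnull => hne (avg_congr_ae (sdiff_ae_eq_self.2 ?_))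
    exact measure_mono_null (inter_subset_inter_right H hL) hnull
  · obtain ⟨A, hAS, hA, hne⟩ := exists_subset_setIntegral_sub_ne_zero
      (hb.subset inter_subset_left) (hm.inter Metric.isOpen_ball.measurableSet) (h ε hε) (avg H)
    have hdiff : ∫ t in H \ A, (t - avg H) ≠ 0 := by
      rwa [setIntegral_sdiff hA (hb.integrableOn_sub_const _) (hAS.trans inter_subset_left),
        setIntegral_sub_avg_eq_zero hb.measure_lt_top.ne, zero_sub, neg_ne_zero]
    exact ⟨A, hAS.trans inter_subset_right, hm.diff hA, measure_pos_of_setIntegral_ne_zero hdiff,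
      avg_ne_of_setIntegral_sub_ne_zero (hb.subset sdiff_subset).measure_lt_top.ne hdiff⟩

theorem accPoints_avg_eq (H : Set ℝ)
    (hb : Bornology.IsBounded H) (hm : MeasurableSet H) (hpos : 0 < volume H) :
    {x : ℝ | ∀ ε > 0, ∃ L : Set ℝ, L ⊆ Metric.ball x ε ∧
        MeasurableSet (H \ L) ∧ 0 < volume (H \ L) ∧ avg (H \ L) ≠ avg H} =
      {x : ℝ | ∀ δ > 0, 0 < volume (H ∩ Metric.ball x δ)} :=
  accPoints_avg_eq_general H hb hm
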